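/- Let γ ≥ 0, ρ₂ > 0, and A ∈ ℝ^{n×d} with singular value decomposition A = U Σ Vᵀ, Σ = diag(σ₁,…,σ_l) containing the positive singular values. Then the unique minimizer of the function W̃ ↦ γ‖W̃‖_* + (ρ₂/2)‖W̃ − A‖_F² over ℝ^{n×d} is U · diag(max{σ₁ − γ/ρ₂, 0}, …, max{σ_l − γ/ρ₂, 0}) · Vᵀ, i.e., singular value soft-thresholding of A at level γ/ρ₂. -/

import Mathlib

open Matrix BigOperators Finset Filter

/-- Squared Frobenius norm. -/
noncomputable def frobSq {m n : ℕ} (A : Matrix (Fin m) (Fin n) ℝ) : ℝ :=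
  ∑ i, ∑ j, (A i j) ^ 2

/-- Frobenius norm. -/
noncomputable def frob {m n : ℕ} (A : Matrix (Fin m) (Fin n) ℝ) : ℝ :=
  Real.sqrt (frobSq A)

/-- Entrywise ℓ₁ norm. -/
noncomputable def l1 {m n : ℕ} (A : Matrix (Fin m) (Fin n) ℝ) : ℝ :=
  ∑ i, ∑ j, |A i j|

/-- ℓ_{2,1} norm: sum of Euclidean norms of the rows. -/
noncomputable def l21 {m n : ℕ} (A : Matrix (Fin m) (Fin n) ℝ) : ℝ :=
  ∑ i, Real.sqrt (∑ j, (A i j) ^ 2)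

/-- Nuclear norm: sum of singular values (square roots of eigenvalues of AᵀA). -/
noncomputable def nuclearNorm {m n : ℕ} (A : Matrix (Fin m) (Fin n) ℝ) : ℝ :=
  ∑ i, Real.sqrt ((Matrix.isHermitian_conjTranspose_mul_self A).eigenvalues i)

/-- Matrix inner product ⟨P,Q⟩ = tr(PᵀQ). -/
noncomputable def minner {m n : ℕ} (A B : Matrix (Fin m) (Fin n) ℝ) : ℝ :=
  ∑ i, ∑ j, A i j * B i j

/-- ℓ_{2,0}: number of nonzero rows. -/
noncomputable def l20 {m n : ℕ} (A : Matrix (Fin m) (Fin n) ℝ) : ℕ :=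
  {i | A i ≠ 0}.ncard

/-!
The objective is `γ‖·‖_*` plus the `ρ₂`-strongly convex term `(ρ₂/2)‖· - A‖_F²`, so `D` is its
unique minimizer once `ρ₂ (A - D) = γ G` for a subgradient `G` of the nuclear norm at `D`.
The certificate is `G = U diag(c) Vᵀ` with `c_t = 1` where `σ_t > γ/ρ₂` and `c_t = ρ₂ σ_t / γ`
otherwise. Being a contraction, `G` satisfies `⟨G, W⟩ ≤ ‖W‖_*` for every `W` (pair `W` with an
eigenbasis of `WᵀW` and use Cauchy–Schwarz). Conversely `‖D‖_* = ⟨P, D⟩` for the polar factor `P`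
of `D`, again a contraction, which bounds `‖D‖_*` by `∑ max(σ_t - γ/ρ₂, 0) = ⟨G, D⟩`.
Expanding the square then gives `f W ≥ f D + (ρ₂/2)‖W - D‖_F²`.
-/

section Contraction

variable {m n k : Type*} [Fintype m] [Fintype n]

def IsContraction (G : Matrix m n ℝ) : Prop :=
  ∀ x : n → ℝ, G *ᵥ x ⬝ᵥ G *ᵥ x ≤ x ⬝ᵥ x

theorem dotProduct_le_sqrt_mul_sqrt (x y : n → ℝ) : x ⬝ᵥ y ≤ √(x ⬝ᵥ x) * √(y ⬝ᵥ y) := by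
  simpa [dotProduct, sq] using Real.sum_mul_le_sqrt_mul_sqrt univ x y

theorem mulVec_dotProduct_mulVec (G : Matrix m n ℝ) (x y : n → ℝ) :
    G *ᵥ x ⬝ᵥ G *ᵥ y = x ⬝ᵥ (Gᵀ * G) *ᵥ y := by
  rw [dotProduct_comm, dotProduct_mulVec, ← mulVec_transpose, ← mulVec_mulVec, dotProduct_comm]

theorem dotProduct_transpose_mulVec_le [Fintype k] [DecidableEq k] {V : Matrix n k ℝ}
    (hV : Vᵀ * V = 1) (x : n → ℝ) : Vᵀ *ᵥ x ⬝ᵥ Vᵀ *ᵥ x ≤ x ⬝ᵥ x := by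
  set y := Vᵀ *ᵥ x
  have hxy : x ⬝ᵥ V *ᵥ y = y ⬝ᵥ y := by
    rw [dotProduct_mulVec, ← mulVec_transpose]
  have hyy : V *ᵥ y ⬝ᵥ V *ᵥ y = y ⬝ᵥ y := by
    rw [mulVec_dotProduct_mulVec, hV, one_mulVec]
  have h := dotProduct_self_star_nonneg (x - V *ᵥ y)
  simp only [star_trivial, sub_dotProduct, dotProduct_sub, hyy, hxy,
    dotProduct_comm (V *ᵥ y) x] at h
  linarith

theorem isContraction_of_transpose_mul_self_eq [Fintype k] [DecidableEq k] {G : Matrix m n ℝ}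
    {V : Matrix n k ℝ} {e : k → ℝ} (hV : Vᵀ * V = 1) (he : ∀ t, e t ≤ 1)
    (hG : Gᵀ * G = V * diagonal e * Vᵀ) : IsContraction G := by
  intro x
  set y := Vᵀ *ᵥ x
  calc G *ᵥ x ⬝ᵥ G *ᵥ x = ∑ t, e t * y t ^ 2 := by
        rw [mulVec_dotProduct_mulVec, hG, ← mulVec_mulVec, dotProduct_mulVec, ← mulVec_transpose,
          transpose_mul, ← mulVec_mulVec, diagonal_transpose]
        simp [dotProduct, mulVec_diagonal, y, sq, mul_assoc]
    _ ≤ ∑ t, y t ^ 2 := by gcongr with t; nlinarith [he t, sq_nonneg (y t)]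
    _ = y ⬝ᵥ y := by simp [dotProduct, sq]
    _ ≤ x ⬝ᵥ x := dotProduct_transpose_mulVec_le hV x

theorem isContraction_mul_diagonal_mul_transpose [Fintype k] [DecidableEq k] {U : Matrix m k ℝ}
    {V : Matrix n k ℝ} {c : k → ℝ} (hU : Uᵀ * U = 1) (hV : Vᵀ * V = 1) (hc : ∀ t, |c t| ≤ 1) :
    IsContraction (U * diagonal c * Vᵀ) := by
  refine isContraction_of_transpose_mul_self_eq (e := fun t => c t ^ 2) hV
    (fun t => by simpa [sq_abs] using pow_le_one₀ (abs_nonneg _) (hc t) (n := 2)) ?_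
  calc (U * diagonal c * Vᵀ)ᵀ * (U * diagonal c * Vᵀ)
      = V * diagonal c * (Uᵀ * U) * diagonal c * Vᵀ := by
        simp only [transpose_mul, transpose_transpose, diagonal_transpose, Matrix.mul_assoc]
    _ = V * diagonal (fun t => c t ^ 2) * Vᵀ := by
        rw [hU, Matrix.mul_one, Matrix.mul_assoc V, diagonal_mul_diagonal]
        simp only [sq]

theorem IsContraction.transpose_mul_mul_apply_le {G : Matrix m n ℝ} (hG : IsContraction G)
    (X : Matrix m k ℝ) (Y : Matrix n k ℝ) (t : k) :
    (Xᵀ * G * Y) t t ≤ √((Xᵀ * X) t t) * √((Yᵀ * Y) t t) := by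
  have hXGY : (Xᵀ * G * Y) t t = Xᵀ t ⬝ᵥ G *ᵥ Yᵀ t := by
    simp only [mul_apply, transpose_apply, dotProduct, mulVec, Finset.mul_sum, Finset.sum_mul,
      mul_assoc]
    exact Finset.sum_comm
  have hXX : (Xᵀ * X) t t = Xᵀ t ⬝ᵥ Xᵀ t := by simp [mul_apply, dotProduct]
  have hYY : (Yᵀ * Y) t t = Yᵀ t ⬝ᵥ Yᵀ t := by simp [mul_apply, dotProduct]
  rw [hXGY, hXX, hYY]
  exact (dotProduct_le_sqrt_mul_sqrt _ _).trans
    (mul_le_mul_of_nonneg_left (Real.sqrt_le_sqrt (hG _)) (Real.sqrt_nonneg _))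

end Contraction

section SingularValues

variable {n d : ℕ}

noncomputable def rightSingularVectors (W : Matrix (Fin n) (Fin d) ℝ) : Matrix (Fin d) (Fin d) ℝ :=
  (isHermitian_conjTranspose_mul_self W).eigenvectorUnitary

noncomputable def singularValues (W : Matrix (Fin n) (Fin d) ℝ) (i : Fin d) : ℝ :=
  √((isHermitian_conjTranspose_mul_self W).eigenvalues i)

theorem nuclearNorm_eq_sum_singularValues (W : Matrix (Fin n) (Fin d) ℝ) :
    nuclearNorm W = ∑ i, singularValues W i :=
  rfl

theorem singularValues_nonneg (W : Matrix (Fin n) (Fin d) ℝ) (i : Fin d) :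
    0 ≤ singularValues W i :=
  Real.sqrt_nonneg _

theorem rightSingularVectors_transpose_mul_self (W : Matrix (Fin n) (Fin d) ℝ) :
    (rightSingularVectors W)ᵀ * rightSingularVectors W = 1 := by
  simpa [rightSingularVectors, star_eq_conjTranspose] using
    mem_unitaryGroup_iff'.mp (isHermitian_conjTranspose_mul_self W).eigenvectorUnitary.2

theorem rightSingularVectors_mul_transpose_self (W : Matrix (Fin n) (Fin d) ℝ) :
    rightSingularVectors W * (rightSingularVectors W)ᵀ = 1 := by
  simpa [rightSingularVectors, star_eq_conjTranspose] using
    mem_unitaryGroup_iff.mp (isHermitian_conjTranspose_mul_self W).eigenvectorUnitary.2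

theorem gram_mul_rightSingularVectors (W : Matrix (Fin n) (Fin d) ℝ) :
    (W * rightSingularVectors W)ᵀ * (W * rightSingularVectors W)
      = diagonal (fun i => singularValues W i ^ 2) := by
  have h := (isHermitian_conjTranspose_mul_self W).conjStarAlgAut_star_eigenvectorUnitary
  have hμ i := (posSemidef_conjTranspose_mul_self W).eigenvalues_nonneg i
  simp only [Unitary.conjStarAlgAut_star_apply, star_eq_conjTranspose,
    conjTranspose_eq_transpose_of_trivial] at h
  simp only [singularValues, Real.sq_sqrt (hμ _), transpose_mul, rightSingularVectors]
  simp only [Matrix.mul_assoc, Function.comp_def, RCLike.ofReal_real_eq_id, id] at h ⊢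
  exact h

end SingularValues

section NuclearNormDuality

variable {n d : ℕ}

theorem minner_eq_trace (A B : Matrix (Fin n) (Fin d) ℝ) : minner A B = trace (Aᵀ * B) := by
  simp only [minner, trace, Matrix.diag, mul_apply, transpose_apply]
  exact Finset.sum_comm

theorem minner_le_nuclearNorm {G : Matrix (Fin n) (Fin d) ℝ} (hG : IsContraction G)
    (W : Matrix (Fin n) (Fin d) ℝ) : minner G W ≤ nuclearNorm W := by
  have hWQ := gram_mul_rightSingularVectors W
  have hQQ := rightSingularVectors_transpose_mul_self W
  have hQQ' := rightSingularVectors_mul_transpose_self W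
  set Q := rightSingularVectors W
  have htrace : minner G W = trace ((W * Q)ᵀ * G * Q) := by
    rw [minner_eq_trace, ← trace_transpose, transpose_mul, transpose_transpose,
      ← Matrix.mul_one (Wᵀ * G), ← hQQ', ← Matrix.mul_assoc,
      trace_mul_comm, transpose_mul]
    simp only [Matrix.mul_assoc]
  rw [htrace, nuclearNorm_eq_sum_singularValues, trace]
  refine Finset.sum_le_sum fun t _ => (hG.transpose_mul_mul_apply_le _ _ t).trans_eq ?_
  rw [hWQ, hQQ, diagonal_apply_eq, one_apply_eq, Real.sqrt_one, mul_one,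
    Real.sqrt_sq (singularValues_nonneg W t)]

theorem exists_isContraction_minner_eq_nuclearNorm (W : Matrix (Fin n) (Fin d) ℝ) :
    ∃ P, IsContraction P ∧ minner P W = nuclearNorm W := by
  have hWQ := gram_mul_rightSingularVectors W
  set Q := rightSingularVectors W
  set s := singularValues W
  -- `0⁻¹ = 0`, so `diagonal s⁻¹` inverts exactly the nonzero singular values: this is the polar
  -- factor of `W`.
  refine ⟨W * Q * diagonal s⁻¹ * Qᵀ, ?_, ?_⟩
  · refine isContraction_of_transpose_mul_self_eq (e := fun t => (s t * (s t)⁻¹) ^ 2)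
      (rightSingularVectors_transpose_mul_self W) (fun t => ?_) ?_
    · rcases eq_or_ne (s t) 0 with h | h <;> simp [h]
    · calc (W * Q * diagonal s⁻¹ * Qᵀ)ᵀ * (W * Q * diagonal s⁻¹ * Qᵀ)
          = Q * (diagonal s⁻¹ * ((W * Q)ᵀ * (W * Q)) * diagonal s⁻¹) * Qᵀ := by
            simp only [transpose_mul, transpose_transpose, diagonal_transpose, Matrix.mul_assoc]
        _ = Q * diagonal (fun t => (s t * (s t)⁻¹) ^ 2) * Qᵀ := by
            rw [hWQ, diagonal_mul_diagonal, diagonal_mul_diagonal]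
            congr 3
            ext t
            simp only [Pi.inv_apply]
            ring
  · rw [minner_eq_trace, nuclearNorm_eq_sum_singularValues]
    calc trace ((W * Q * diagonal s⁻¹ * Qᵀ)ᵀ * W)
        = trace (diagonal s⁻¹ * ((W * Q)ᵀ * (W * Q))) := by
          simp only [transpose_mul, transpose_transpose, diagonal_transpose, Matrix.mul_assoc]
          rw [trace_mul_comm Q]
          simp only [Matrix.mul_assoc]
        _ = ∑ t, s t := by
          rw [hWQ, diagonal_mul_diagonal, trace_diagonal]
          refine Finset.sum_congr rfl fun t _ => ?_
          rcases eq_or_ne (s t) 0 with h | h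
          · simp [h]
          · rw [Pi.inv_apply]
            field_simp

end NuclearNormDuality

section Thresholding

variable {n d l : ℕ}

theorem minner_mul_diagonal_mul_transpose (P : Matrix (Fin n) (Fin d) ℝ)
    (U : Matrix (Fin n) (Fin l) ℝ) (V : Matrix (Fin d) (Fin l) ℝ) (m : Fin l → ℝ) :
    minner P (U * diagonal m * Vᵀ) = ∑ t, m t * (Uᵀ * P * V) t t := by
  have hcomm : minner P (U * diagonal m * Vᵀ) = minner (U * diagonal m * Vᵀ) P := by
    simp only [minner, mul_comm]
  rw [hcomm, minner_eq_trace]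
  simp only [transpose_mul, transpose_transpose, diagonal_transpose, Matrix.mul_assoc]
  rw [trace_mul_comm V]
  simp [trace, diagonal_mul, Matrix.mul_assoc]

theorem nuclearNorm_mul_diagonal_mul_transpose_le {U : Matrix (Fin n) (Fin l) ℝ}
    {V : Matrix (Fin d) (Fin l) ℝ} {m : Fin l → ℝ} (hU : Uᵀ * U = 1) (hV : Vᵀ * V = 1)
    (hm : ∀ t, 0 ≤ m t) : nuclearNorm (U * diagonal m * Vᵀ) ≤ ∑ t, m t := by
  obtain ⟨P, hP, hPW⟩ := exists_isContraction_minner_eq_nuclearNorm (U * diagonal m * Vᵀ)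
  rw [← hPW, minner_mul_diagonal_mul_transpose]
  refine Finset.sum_le_sum fun t _ => mul_le_of_le_one_right (hm t) ?_
  refine (hP.transpose_mul_mul_apply_le U V t).trans_eq ?_
  simp [hU, hV]

theorem exists_abs_le_one_soft_threshold {σ τ : ℝ} (hσ : 0 ≤ σ) (hτ : 0 ≤ τ) :
    ∃ c, |c| ≤ 1 ∧ c * max (σ - τ) 0 = max (σ - τ) 0 ∧ σ - max (σ - τ) 0 = τ * c := by
  rcases le_or_gt σ τ with h | h
  · refine ⟨σ / τ, ?_, by simp [h], ?_⟩
    · rw [abs_div, abs_of_nonneg hσ, abs_of_nonneg hτ]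
      exact div_le_one_of_le₀ h hτ
    · rcases hτ.eq_or_lt with h0 | h0
      · simp [← h0, le_antisymm (h0 ▸ h) hσ]
      · rw [max_eq_right (by linarith), mul_div_cancel₀ _ h0.ne']
        ring
  · exact ⟨1, by simp, one_mul _, by rw [max_eq_left (by linarith)]; ring⟩

end Thresholding

section Proximal

variable {n d : ℕ}

theorem frobSq_nonneg (X : Matrix (Fin n) (Fin d) ℝ) : 0 ≤ frobSq X := by
  unfold frobSq
  positivity

theorem frobSq_eq_zero_iff {X : Matrix (Fin n) (Fin d) ℝ} : frobSq X = 0 ↔ X = 0 := by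
  simp [frobSq, Finset.sum_eq_zero_iff_of_nonneg, sq_nonneg, Finset.sum_nonneg, ← Matrix.ext_iff]

theorem add_frobSq_le_of_subgradient {γ ρ : ℝ} (hγ : 0 ≤ γ) {A D G : Matrix (Fin n) (Fin d) ℝ}
    (hG : IsContraction G) (hGD : nuclearNorm D ≤ minner G D) (hADG : ρ • (A - D) = γ • G)
    (W : Matrix (Fin n) (Fin d) ℝ) :
    γ * nuclearNorm D + ρ / 2 * frobSq (D - A) + ρ / 2 * frobSq (W - D)
      ≤ γ * nuclearNorm W + ρ / 2 * frobSq (W - A) := by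
  have hexpand : ρ / 2 * frobSq (W - A)
      = ρ / 2 * frobSq (D - A) + ρ / 2 * frobSq (W - D) + γ * (minner G D - minner G W) := by
    simp only [frobSq, minner, Finset.mul_sum, ← Finset.sum_add_distrib, ← Finset.sum_sub_distrib]
    refine Finset.sum_congr rfl fun i _ => Finset.sum_congr rfl fun j _ => ?_
    have hij := congrFun (congrFun hADG i) j
    simp only [Matrix.smul_apply, Matrix.sub_apply, smul_eq_mul] at hij ⊢
    linear_combination (D i j - W i j) * hij
  linarith [mul_le_mul_of_nonneg_left (sub_le_sub hGD (minner_le_nuclearNorm hG W)) hγ]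

end Proximal

/-- the W̃-subproblem is solved by singular value soft-thresholding.
Let γ ≥ 0, ρ₂ > 0, and A ∈ ℝ^{n×d} with SVD A = U Σ Vᵀ, Σ = diag(σ₁,…,σ_l) containing
the positive singular values.  The unique minimizer of W̃ ↦ γ‖W̃‖_* + (ρ₂/2)‖W̃ − A‖_F²
is U diag(max{σᵢ − γ/ρ₂, 0}) Vᵀ. -/
theorem svt_unique_minimizer {n d l : ℕ} (γ ρ₂ : ℝ) (hγ : 0 ≤ γ) (hρ₂ : 0 < ρ₂)
    (A : Matrix (Fin n) (Fin d) ℝ)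
    (U : Matrix (Fin n) (Fin l) ℝ) (V : Matrix (Fin d) (Fin l) ℝ) (σ : Fin l → ℝ)
    (hU : Uᵀ * U = 1) (hV : Vᵀ * V = 1) (hσ : ∀ i, 0 < σ i)
    (hA : A = U * Matrix.diagonal σ * Vᵀ) :
    let f : Matrix (Fin n) (Fin d) ℝ → ℝ :=
      fun Wt => γ * nuclearNorm Wt + (ρ₂ / 2) * frobSq (Wt - A)
    let D : Matrix (Fin n) (Fin d) ℝ :=
      U * Matrix.diagonal (fun i => max (σ i - γ / ρ₂) 0) * Vᵀ
    (∀ Wt, f D ≤ f Wt) ∧ (∀ Wt, (∀ Wt', f Wt ≤ f Wt') → Wt = D) := by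
  intro f D
  choose c hc hcm hσm using fun t =>
    exists_abs_le_one_soft_threshold (hσ t).le (div_nonneg hγ hρ₂.le : 0 ≤ γ / ρ₂)
  set G := U * diagonal c * Vᵀ
  have hGD : nuclearNorm D ≤ minner G D := by
    have hUGV : Uᵀ * G * V = diagonal c := by
      rw [show Uᵀ * G * V = Uᵀ * U * diagonal c * (Vᵀ * V) by simp only [G, Matrix.mul_assoc], hU,
        hV, Matrix.one_mul, Matrix.mul_one]
    rw [minner_mul_diagonal_mul_transpose, hUGV]
    refine (nuclearNorm_mul_diagonal_mul_transpose_le hU hV fun t => le_max_right _ _).trans_eq ?_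
    simp [mul_comm, hcm]
  have hADG : ρ₂ • (A - D) = γ • G := by
    have hcoef : (ρ₂ • fun t => σ t - max (σ t - γ / ρ₂) 0) = γ • c := by
      ext t
      rw [Pi.smul_apply, hσm t, Pi.smul_apply, smul_eq_mul, smul_eq_mul]
      field_simp
    rw [hA, ← Matrix.sub_mul, ← Matrix.mul_sub, diagonal_sub, ← Matrix.smul_mul,
      ← Matrix.mul_smul, ← diagonal_smul, hcoef, diagonal_smul, Matrix.mul_smul, Matrix.smul_mul]
  have hgrowth W : f D + ρ₂ / 2 * frobSq (W - D) ≤ f W :=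
    add_frobSq_le_of_subgradient hγ (isContraction_mul_diagonal_mul_transpose hU hV hc) hGD hADG W
  refine ⟨fun W => le_trans ?_ (hgrowth W), fun W hW => ?_⟩
  · exact le_add_of_nonneg_right (mul_nonneg (by positivity) (frobSq_nonneg _))
  · have h0 : frobSq (W - D) ≤ 0 := by nlinarith [hgrowth W, hW D]
    exact sub_eq_zero.mp (frobSq_eq_zero_iff.mp (le_antisymm h0 (frobSq_nonneg _)))
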